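/- arXiv:1111.5178 — 2 statements merged into one kernel-verified Lean document; each statement's English description precedes it below -/
import Mathlib

section
/- If f : ℝ² → ℝ is a smooth solution of the Hirota-Ramani equation with parameter a ≠ 0, then for every s ∈ ℝ the function g(x,t) = e^s · f(x·e^s, t·e^{-3s}) + (x/a)·(1 - e^{2s}) + t·(1 - e^{-2s}) is also a solution. -/
/-- Partial derivative with respect to the first variable (x). -/
noncomputable def px (u : ℝ → ℝ → ℝ) : ℝ → ℝ → ℝ := fun x t => deriv (fun x' => u x' t) x

/-- Partial derivative with respect to the second variable (t). -/
noncomputable def pt (u : ℝ → ℝ → ℝ) : ℝ → ℝ → ℝ := fun x t => deriv (fun t' => u x t') t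

/-- The Hirota-Ramani equation u_t - u_xxt + a·u_x·(1 - u_t) = 0. -/
def IsHR (a : ℝ) (u : ℝ → ℝ → ℝ) : Prop :=
  ∀ x t : ℝ, pt u x t - pt (px (px u)) x t + a * px u x t * (1 - pt u x t) = 0

/-- Smoothness of a function of two real variables. -/
def Smooth2 (u : ℝ → ℝ → ℝ) : Prop := ContDiff ℝ (⊤ : ℕ∞) (fun p : ℝ × ℝ => u p.1 p.2)

lemma diffX (u : ℝ → ℝ → ℝ) (hu : Smooth2 u) (x t : ℝ) :
    HasDerivAt (fun x' => u x' t) (px u x t) x := by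
  have h : DifferentiableAt ℝ (fun x' => u x' t) x := by
    exact ((hu.differentiable (by simp) (x, t)).comp x
      ((differentiableAt_id : DifferentiableAt ℝ id x).prodMk (differentiableAt_const t)) : _)
  exact h.hasDerivAt

lemma diffT (u : ℝ → ℝ → ℝ) (hu : Smooth2 u) (x t : ℝ) :
    HasDerivAt (fun t' => u x t') (pt u x t) t := by
  have h : DifferentiableAt ℝ (fun t' => u x t') t := by
    exact ((hu.differentiable (by simp) (x, t)).comp t
      ((differentiableAt_const x).prodMk differentiableAt_id) : _)
  exact h.hasDerivAt

lemma smooth_px (u : ℝ → ℝ → ℝ) (hu : Smooth2 u) : Smooth2 (px u) := by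
  have h : (fun p : ℝ × ℝ => px u p.1 p.2)
      = fun p : ℝ × ℝ => fderiv ℝ (fun q : ℝ × ℝ => u q.1 q.2) p (1, 0) := by
    funext p
    have hF := ((hu.differentiable (by simp)) p).hasFDerivAt
    have hg : HasDerivAt (fun x' : ℝ => ((x', p.2) : ℝ × ℝ)) ((1 : ℝ), (0 : ℝ)) p.1 :=
      (hasDerivAt_id p.1).prodMk (hasDerivAt_const p.1 p.2)
    have := hF.comp_hasDerivAt p.1 (by simpa using hg)
    exact this.deriv
  rw [Smooth2, h]
  exact (hu.fderiv_right (by simp)).clm_apply contDiff_const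

lemma smooth_pt (u : ℝ → ℝ → ℝ) (hu : Smooth2 u) : Smooth2 (pt u) := by
  have h : (fun p : ℝ × ℝ => pt u p.1 p.2)
      = fun p : ℝ × ℝ => fderiv ℝ (fun q : ℝ × ℝ => u q.1 q.2) p (0, 1) := by
    funext p
    have hF := ((hu.differentiable (by simp)) p).hasFDerivAt
    have hg : HasDerivAt (fun t' : ℝ => ((p.1, t') : ℝ × ℝ)) ((0 : ℝ), (1 : ℝ)) p.2 :=
      (hasDerivAt_const p.2 p.1).prodMk (hasDerivAt_id p.2)
    have := hF.comp_hasDerivAt p.2 (by simpa using hg)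
    exact this.deriv

  rw [Smooth2, h]
  exact (hu.fderiv_right (by simp)).clm_apply contDiff_const

theorem stmt_4 (a : ℝ) (ha : a ≠ 0) (f : ℝ → ℝ → ℝ) (hf : Smooth2 f)
    (hsol : IsHR a f) (s : ℝ) :
    IsHR a (fun x t =>
      Real.exp s * f (x * Real.exp s) (t * Real.exp (-3 * s))
        + (x / a) * (1 - Real.exp (2 * s)) + t * (1 - Real.exp (-2 * s))) := by
  intro x t
  set E := Real.exp s with hE
  set g : ℝ → ℝ → ℝ := fun x t =>
      E * f (x * E) (t * Real.exp (-3 * s))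
        + (x / a) * (1 - Real.exp (2 * s)) + t * (1 - Real.exp (-2 * s)) with hg
  -- first x-derivative
  have hpx : ∀ x' t' : ℝ, px g x' t'
      = E * E * px f (x' * E) (t' * Real.exp (-3 * s)) + (1 - Real.exp (2 * s)) / a := by
    intro x' t'
    have h : HasDerivAt (fun y => g y t')
        (E * (px f (x' * E) (t' * Real.exp (-3 * s)) * E)
          + (1 / a) * (1 - Real.exp (2 * s)) + 0) x' := by
      exact ((((diffX f hf (x' * E) (t' * Real.exp (-3 * s))).comp x'
        (hasDerivAt_mul_const E)).const_mul E).add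
        (((hasDerivAt_id x').div_const a).mul_const (1 - Real.exp (2 * s)))).add
        (hasDerivAt_const x' (t' * (1 - Real.exp (-2 * s))))
    have := h.deriv
    rw [show px g x' t' = deriv (fun y => g y t') x' from rfl, this]
    ring
  -- second x-derivative
  have hppx : ∀ x' t' : ℝ, px (px g) x' t'
      = E * E * E * px (px f) (x' * E) (t' * Real.exp (-3 * s)) := by
    intro x' t'
    have hfun : (fun y => px g y t')
        = fun y => E * E * px f (y * E) (t' * Real.exp (-3 * s)) + (1 - Real.exp (2 * s)) / a :=
      funext fun y => hpx y t'
    have h : HasDerivAt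
        (fun y => E * E * px f (y * E) (t' * Real.exp (-3 * s)) + (1 - Real.exp (2 * s)) / a)
        (E * E * (px (px f) (x' * E) (t' * Real.exp (-3 * s)) * E) + 0) x' :=
      (((diffX (px f) (smooth_px f hf) (x' * E) (t' * Real.exp (-3 * s))).comp x'
        (hasDerivAt_mul_const E)).const_mul (E * E)).add
        (hasDerivAt_const x' ((1 - Real.exp (2 * s)) / a))
    rw [show px (px g) x' t' = deriv (fun y => px g y t') x' from rfl, hfun, h.deriv]
    ring
  -- t-derivative of pxpx
  have hppxt : pt (px (px g)) x t
      = E * E * E * (pt (px (px f)) (x * E) (t * Real.exp (-3 * s)) * Real.exp (-3 * s)) := by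
    have hfun : (fun τ => px (px g) x τ)
        = fun τ => E * E * E * px (px f) (x * E) (τ * Real.exp (-3 * s)) :=
      funext fun τ => hppx x τ
    have h : HasDerivAt
        (fun τ => E * E * E * px (px f) (x * E) (τ * Real.exp (-3 * s)))
        (E * E * E * (pt (px (px f)) (x * E) (t * Real.exp (-3 * s)) * Real.exp (-3 * s))) t :=
      ((diffT (px (px f)) (smooth_px (px f) (smooth_px f hf)) (x * E)
        (t * Real.exp (-3 * s))).comp t (hasDerivAt_mul_const (Real.exp (-3 * s)))).const_mul _
    rw [show pt (px (px g)) x t = deriv (fun τ => px (px g) x τ) t from rfl, hfun, h.deriv]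
  -- t-derivative of g
  have hpt : pt g x t
      = E * (pt f (x * E) (t * Real.exp (-3 * s)) * Real.exp (-3 * s))
        + (1 - Real.exp (-2 * s)) := by
    have h : HasDerivAt (fun τ => g x τ)
        (E * (pt f (x * E) (t * Real.exp (-3 * s)) * Real.exp (-3 * s)) + 0
          + (1 - Real.exp (-2 * s))) t := by
      exact ((((diffT f hf (x * E) (t * Real.exp (-3 * s))).comp t
        (hasDerivAt_mul_const (Real.exp (-3 * s)))).const_mul E).add
        (hasDerivAt_const t ((x / a) * (1 - Real.exp (2 * s))))).add
        (hasDerivAt_mul_const (1 - Real.exp (-2 * s)))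
    rw [show pt g x t = deriv (fun τ => g x τ) t from rfl, h.deriv]
    ring
  rw [hpt, hppxt, hpx]
  have key := hsol (x * E) (t * Real.exp (-3 * s))
  set A := px f (x * E) (t * Real.exp (-3 * s)) with hA
  set B := pt f (x * E) (t * Real.exp (-3 * s)) with hB
  set C := pt (px (px f)) (x * E) (t * Real.exp (-3 * s)) with hC
  have h2 : Real.exp (2 * s) = E ^ 2 := by rw [hE, ← Real.exp_nat_mul]; ring_nf
  have h3 : Real.exp (-3 * s) = (E ^ 3)⁻¹ := by
    rw [hE, ← Real.exp_nat_mul, ← Real.exp_neg]; ring_nf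
  have hm2 : Real.exp (-2 * s) = (E ^ 2)⁻¹ := by
    rw [hE, ← Real.exp_nat_mul, ← Real.exp_neg]; ring_nf
  have hEne : E ≠ 0 := Real.exp_ne_zero s
  rw [h2, h3, hm2]
  field_simp
  linear_combination E ^ 2 * key
end

section
/- For any smooth function u : ℝ² → ℝ and a ≠ 0, the divergence identity D_x[ (1/2)a·u·u_tt - (1/3)a·u·u_t·u_tt - (1/3)u·u_xttt + (1/6)u_t·u_xtt + (1/6)u_x·u_ttt - (1/3)u_xt·u_tt ] + D_t[ (1/2)u_t² - (1/2)u_t·u_xxt + (1/2)a·u_x·u_t - (1/3)a·u_x·u_t² + (1/3)u·u_xxtt - (1/2)a·u·u_xt + (1/3)a·u·u_xt·u_t + (1/6)u_x·u_xtt - (1/6)u_xx·u_tt ] = u_tt · ( u_t - u_xxt + a·u_x·(1-u_t) ) holds pointwise; hence solutions of the Hirota-Ramani equation satisfy the corresponding conservation law with multiplier u_tt. -/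
namespace HRaux

lemma slice_x_hasDeriv (F : ℝ × ℝ → ℝ) {x t : ℝ} (hF : DifferentiableAt ℝ F (x, t)) :
    HasDerivAt (fun x' => F (x', t)) (fderiv ℝ F (x, t) (1, 0)) x := by
  have h1 : HasDerivAt (fun x' : ℝ => ((x', t) : ℝ × ℝ)) ((1 : ℝ), (0 : ℝ)) x :=
    (hasDerivAt_id x).prodMk (hasDerivAt_const x t)
  exact hF.hasFDerivAt.comp_hasDerivAt x h1

lemma slice_t_hasDeriv (F : ℝ × ℝ → ℝ) {x t : ℝ} (hF : DifferentiableAt ℝ F (x, t)) :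
    HasDerivAt (fun t' => F (x, t')) (fderiv ℝ F (x, t) (0, 1)) t := by
  have h1 : HasDerivAt (fun t' : ℝ => ((x, t') : ℝ × ℝ)) ((0 : ℝ), (1 : ℝ)) t :=
    (hasDerivAt_const t x).prodMk (hasDerivAt_id t)
  exact hF.hasFDerivAt.comp_hasDerivAt t h1

lemma px_apply (u : ℝ → ℝ → ℝ) (hu : Smooth2 u) (x t : ℝ) :
    px u x t = fderiv ℝ (fun p : ℝ × ℝ => u p.1 p.2) (x, t) (1, 0) :=
  (slice_x_hasDeriv _ ((hu.differentiable (by simp)) (x, t))).deriv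

lemma pt_apply (u : ℝ → ℝ → ℝ) (hu : Smooth2 u) (x t : ℝ) :
    pt u x t = fderiv ℝ (fun p : ℝ × ℝ => u p.1 p.2) (x, t) (0, 1) :=
  (slice_t_hasDeriv _ ((hu.differentiable (by simp)) (x, t))).deriv

lemma contDiff_D (F : ℝ × ℝ → ℝ) (hF : ContDiff ℝ (⊤ : ℕ∞) F) (v : ℝ × ℝ) :
    ContDiff ℝ (⊤ : ℕ∞) (fun p => fderiv ℝ F p v) :=
  (ContinuousLinearMap.apply ℝ ℝ v).contDiff.comp (hF.fderiv_right (by simp))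

lemma smooth_px (u : ℝ → ℝ → ℝ) (hu : Smooth2 u) : Smooth2 (px u) := by
  have h : (fun p : ℝ × ℝ => px u p.1 p.2)
      = fun p : ℝ × ℝ => fderiv ℝ (fun p : ℝ × ℝ => u p.1 p.2) p (1, 0) := by
    funext p
    rw [px_apply u hu p.1 p.2]
  rw [Smooth2, h]
  exact contDiff_D _ hu _

lemma smooth_pt (u : ℝ → ℝ → ℝ) (hu : Smooth2 u) : Smooth2 (pt u) := by
  have h : (fun p : ℝ × ℝ => pt u p.1 p.2)
      = fun p : ℝ × ℝ => fderiv ℝ (fun p : ℝ × ℝ => u p.1 p.2) p (0, 1) := by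
    funext p
    rw [pt_apply u hu p.1 p.2]
  rw [Smooth2, h]
  exact contDiff_D _ hu _

lemma dx (f : ℝ → ℝ → ℝ) (hf : Smooth2 f) (x t : ℝ) :
    HasDerivAt (fun x' => f x' t) (px f x t) x := by
  rw [px_apply f hf]
  exact slice_x_hasDeriv _ ((hf.differentiable (by simp)) (x, t))

lemma dt (f : ℝ → ℝ → ℝ) (hf : Smooth2 f) (x t : ℝ) :
    HasDerivAt (fun t' => f x t') (pt f x t) t := by
  rw [pt_apply f hf]
  exact slice_t_hasDeriv _ ((hf.differentiable (by simp)) (x, t))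

lemma D_swap (F : ℝ × ℝ → ℝ) (hF : ContDiff ℝ (⊤ : ℕ∞) F) (v w p : ℝ × ℝ) :
    fderiv ℝ (fun q => fderiv ℝ F q v) p w = fderiv ℝ (fun q => fderiv ℝ F q w) p v := by
  have hdF : Differentiable ℝ (fderiv ℝ F) := (hF.fderiv_right (m := (⊤ : ℕ∞)) (by simp)).differentiable (by simp)
  have key : ∀ v : ℝ × ℝ, fderiv ℝ (fun q => fderiv ℝ F q v) p
      = (ContinuousLinearMap.apply ℝ ℝ v).comp (fderiv ℝ (fderiv ℝ F) p) := by
    intro v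
    exact ((ContinuousLinearMap.apply ℝ ℝ v).hasFDerivAt.comp p (hdF p).hasFDerivAt).fderiv
  rw [key v, key w]
  simp only [ContinuousLinearMap.coe_comp', Function.comp_apply,
    ContinuousLinearMap.apply_apply]
  exact second_derivative_symmetric
    (fun y => ((hF.differentiable (by simp)) y).hasFDerivAt) (hdF p).hasFDerivAt w v

lemma comm (f : ℝ → ℝ → ℝ) (hf : Smooth2 f) : px (pt f) = pt (px f) := by
  funext x t
  have hpt : Smooth2 (pt f) := smooth_pt f hf
  have hpx : Smooth2 (px f) := smooth_px f hf
  rw [px_apply _ hpt, pt_apply _ hpx]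
  have e1 : (fun p : ℝ × ℝ => pt f p.1 p.2)
      = fun p : ℝ × ℝ => fderiv ℝ (fun p : ℝ × ℝ => f p.1 p.2) p (0, 1) := by
    funext p; rw [pt_apply f hf p.1 p.2]
  have e2 : (fun p : ℝ × ℝ => px f p.1 p.2)
      = fun p : ℝ × ℝ => fderiv ℝ (fun p : ℝ × ℝ => f p.1 p.2) p (1, 0) := by
    funext p; rw [px_apply f hf p.1 p.2]
  rw [e1, e2]
  exact D_swap _ hf _ _ _

end HRaux

/-- Conservation law with multiplier u_tt. -/
theorem stmt_12 (a : ℝ) (ha : a ≠ 0) (u : ℝ → ℝ → ℝ) (hu : Smooth2 u) :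
    (∀ x t : ℝ,
      px (fun x t => (1/2) * a * u x t * pt (pt u) x t
          - (1/3) * a * u x t * pt u x t * pt (pt u) x t
          - (1/3) * u x t * pt (pt (pt (px u))) x t
          + (1/6) * pt u x t * pt (pt (px u)) x t
          + (1/6) * px u x t * pt (pt (pt u)) x t
          - (1/3) * pt (px u) x t * pt (pt u) x t) x t
      + pt (fun x t => (1/2) * (pt u x t)^2
          - (1/2) * pt u x t * pt (px (px u)) x t
          + (1/2) * a * px u x t * pt u x t
          - (1/3) * a * px u x t * (pt u x t)^2
          + (1/3) * u x t * pt (pt (px (px u))) x t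
          - (1/2) * a * u x t * pt (px u) x t
          + (1/3) * a * u x t * pt (px u) x t * pt u x t
          + (1/6) * px u x t * pt (pt (px u)) x t
          - (1/6) * px (px u) x t * pt (pt u) x t) x t
      = pt (pt u) x t *
          (pt u x t - pt (px (px u)) x t + a * px u x t * (1 - pt u x t))) ∧
    (IsHR a u → ∀ x t : ℝ,
      px (fun x t => (1/2) * a * u x t * pt (pt u) x t
          - (1/3) * a * u x t * pt u x t * pt (pt u) x t
          - (1/3) * u x t * pt (pt (pt (px u))) x t
          + (1/6) * pt u x t * pt (pt (px u)) x t
          + (1/6) * px u x t * pt (pt (pt u)) x t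
          - (1/3) * pt (px u) x t * pt (pt u) x t) x t
      + pt (fun x t => (1/2) * (pt u x t)^2
          - (1/2) * pt u x t * pt (px (px u)) x t
          + (1/2) * a * px u x t * pt u x t
          - (1/3) * a * px u x t * (pt u x t)^2
          + (1/3) * u x t * pt (pt (px (px u))) x t
          - (1/2) * a * u x t * pt (px u) x t
          + (1/3) * a * u x t * pt (px u) x t * pt u x t
          + (1/6) * px u x t * pt (pt (px u)) x t
          - (1/6) * px (px u) x t * pt (pt u) x t) x t = 0) := by
  have sT : Smooth2 (pt u) := HRaux.smooth_pt u hu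
  have sX : Smooth2 (px u) := HRaux.smooth_px u hu
  have sTT : Smooth2 (pt (pt u)) := HRaux.smooth_pt _ sT
  have sXT : Smooth2 (pt (px u)) := HRaux.smooth_pt _ sX
  have sXX : Smooth2 (px (px u)) := HRaux.smooth_px _ sX
  have sTTT : Smooth2 (pt (pt (pt u))) := HRaux.smooth_pt _ sTT
  have sXTT : Smooth2 (pt (pt (px u))) := HRaux.smooth_pt _ sXT
  have sXXT : Smooth2 (pt (px (px u))) := HRaux.smooth_pt _ sXX
  have sXTTT : Smooth2 (pt (pt (pt (px u)))) := HRaux.smooth_pt _ sXTT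
  have sXXTT : Smooth2 (pt (pt (px (px u)))) := HRaux.smooth_pt _ sXXT
  have key : ∀ x t : ℝ,
      px (fun x t => (1/2) * a * u x t * pt (pt u) x t
          - (1/3) * a * u x t * pt u x t * pt (pt u) x t
          - (1/3) * u x t * pt (pt (pt (px u))) x t
          + (1/6) * pt u x t * pt (pt (px u)) x t
          + (1/6) * px u x t * pt (pt (pt u)) x t
          - (1/3) * pt (px u) x t * pt (pt u) x t) x t
      + pt (fun x t => (1/2) * (pt u x t)^2
          - (1/2) * pt u x t * pt (px (px u)) x t
          + (1/2) * a * px u x t * pt u x t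
          - (1/3) * a * px u x t * (pt u x t)^2
          + (1/3) * u x t * pt (pt (px (px u))) x t
          - (1/2) * a * u x t * pt (px u) x t
          + (1/3) * a * u x t * pt (px u) x t * pt u x t
          + (1/6) * px u x t * pt (pt (px u)) x t
          - (1/6) * px (px u) x t * pt (pt u) x t) x t
      = pt (pt u) x t *
          (pt u x t - pt (px (px u)) x t + a * px u x t * (1 - pt u x t)) := by
    intro x t
    have h1 := ((HRaux.dx u hu x t).const_mul ((1:ℝ)/2*a)).mul (HRaux.dx _ sTT x t)
    have h2 := (((HRaux.dx u hu x t).const_mul ((1:ℝ)/3*a)).mul (HRaux.dx _ sT x t)).mul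
      (HRaux.dx _ sTT x t)
    have h3 := ((HRaux.dx u hu x t).const_mul ((1:ℝ)/3)).mul (HRaux.dx _ sXTTT x t)
    have h4 := ((HRaux.dx _ sT x t).const_mul ((1:ℝ)/6)).mul (HRaux.dx _ sXTT x t)
    have h5 := ((HRaux.dx _ sX x t).const_mul ((1:ℝ)/6)).mul (HRaux.dx _ sTTT x t)
    have h6 := ((HRaux.dx _ sXT x t).const_mul ((1:ℝ)/3)).mul (HRaux.dx _ sTT x t)
    have HX := ((((h1.sub h2).sub h3).add h4).add h5).sub h6
    have k1 := ((HRaux.dt _ sT x t).pow 2).const_mul ((1:ℝ)/2)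
    have k2 := ((HRaux.dt _ sT x t).const_mul ((1:ℝ)/2)).mul (HRaux.dt _ sXXT x t)
    have k3 := ((HRaux.dt _ sX x t).const_mul ((1:ℝ)/2*a)).mul (HRaux.dt _ sT x t)
    have k4 := ((HRaux.dt _ sX x t).const_mul ((1:ℝ)/3*a)).mul ((HRaux.dt _ sT x t).pow 2)
    have k5 := ((HRaux.dt u hu x t).const_mul ((1:ℝ)/3)).mul (HRaux.dt _ sXXTT x t)
    have k6 := ((HRaux.dt u hu x t).const_mul ((1:ℝ)/2*a)).mul (HRaux.dt _ sXT x t)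
    have k7 := (((HRaux.dt u hu x t).const_mul ((1:ℝ)/3*a)).mul (HRaux.dt _ sXT x t)).mul
      (HRaux.dt _ sT x t)
    have k8 := ((HRaux.dt _ sX x t).const_mul ((1:ℝ)/6)).mul (HRaux.dt _ sXTT x t)
    have k9 := ((HRaux.dt _ sXX x t).const_mul ((1:ℝ)/6)).mul (HRaux.dt _ sTT x t)
    have HT := ((((((((k1.sub k2).add k3).sub k4).add k5).sub k6).add k7).add k8).sub k9)
    have ex : px (fun x t => (1/2) * a * u x t * pt (pt u) x t
          - (1/3) * a * u x t * pt u x t * pt (pt u) x t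
          - (1/3) * u x t * pt (pt (pt (px u))) x t
          + (1/6) * pt u x t * pt (pt (px u)) x t
          + (1/6) * px u x t * pt (pt (pt u)) x t
          - (1/3) * pt (px u) x t * pt (pt u) x t) x t = _ := HX.deriv
    have et : pt (fun x t => (1/2) * (pt u x t)^2
          - (1/2) * pt u x t * pt (px (px u)) x t
          + (1/2) * a * px u x t * pt u x t
          - (1/3) * a * px u x t * (pt u x t)^2
          + (1/3) * u x t * pt (pt (px (px u))) x t
          - (1/2) * a * u x t * pt (px u) x t
          + (1/3) * a * u x t * pt (px u) x t * pt u x t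
          + (1/6) * px u x t * pt (pt (px u)) x t
          - (1/6) * px (px u) x t * pt (pt u) x t) x t = _ := HT.deriv
    rw [ex, et]
    simp only [HRaux.comm u hu, HRaux.comm _ sT, HRaux.comm _ sTT, HRaux.comm _ sX,
      HRaux.comm _ sXT, HRaux.comm _ sXTT, Pi.mul_apply, Pi.pow_apply]
    ring
  refine ⟨key, fun hHR x t => ?_⟩
  rw [key x t, hHR x t, mul_zero]
end
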